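/- arXiv:0910.2246 — 4 statements merged into one kernel-verified Lean document; each statement's English description precedes it below -/
import Mathlib

section
/- The only integer solution of the equation -2x^3 + 5x^2y + 4xy^2 - 3y^3 = 3 is x = 0, y = -1. -/
theorem stmt1 (x y : ℤ) :
    -2*x^3 + 5*x^2*y + 4*x*y^2 - 3*y^3 = 3 ↔ x = 0 ∧ y = -1 := by
  constructor
  · intro h
    have hfac : (x - 3*y) * ((y - 2*x) * (x + y)) = 3 := by ring_nf; linarith
    have ha : (x - 3*y) ∣ 3 := ⟨(y - 2*x) * (x + y), hfac.symm⟩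
    have hc : (x + y) ∣ 3 := ⟨(x - 3*y) * (y - 2*x), by linarith [hfac]⟩
    have ha' : |x - 3*y| ≤ 3 := by
      have := Int.le_of_dvd (by norm_num : (0:ℤ) < 3) ((abs_dvd _ _).mpr ha)
      simpa using this
    have hc' : |x + y| ≤ 3 := by
      have := Int.le_of_dvd (by norm_num : (0:ℤ) < 3) ((abs_dvd _ _).mpr hc)
      simpa using this
    rw [abs_le] at ha' hc'
    have hy : -1 ≤ y ∧ y ≤ 1 := by omega
    have hx : -6 ≤ x ∧ x ≤ 6 := by omega
    obtain ⟨hy1, hy2⟩ := hy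
    obtain ⟨hx1, hx2⟩ := hx
    clear h ha hc
    interval_cases x <;> interval_cases y <;> omega
  · rintro ⟨rfl, rfl⟩
    norm_num
end

section
/- The equation -2x^3 + 5x^2y + 4xy^2 - 3y^3 = 6 has no integer solutions. -/
theorem stmt2 : ¬ ∃ x y : ℤ, -2*x^3 + 5*x^2*y + 4*x*y^2 - 3*y^3 = 6 := by
  rintro ⟨x, y, h⟩
  have h7 : (-2*(x:ZMod 7)^3 + 5*x^2*y + 4*x*y^2 - 3*y^3 : ZMod 7) = 6 := by
    have := congrArg (Int.cast : ℤ → ZMod 7) h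
    push_cast at this
    exact this
  revert h7
  generalize (x : ZMod 7) = a
  generalize (y : ZMod 7) = b
  revert a b
  decide
end

section
/- For all integers x and y, (x+y)(2x-y)(-x+3y) ≠ 6. -/
theorem stmt9 (x y : ℤ) : (x+y)*(2*x-y)*(-x+3*y) ≠ 6 := by
  intro h
  have h7 : ((x+y)*(2*x-y)*(-x+3*y) : ZMod 7) = 6 := by
    have := congrArg (Int.cast : ℤ → ZMod 7) h
    push_cast at this
    push_cast [Int.cast_neg] at this ⊢
    linear_combination this
  revert h7
  generalize (x : ZMod 7) = a
  generalize (y : ZMod 7) = b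
  revert a b
  decide
end

section
/- There exist exactly finitely many (in fact, exactly one) pairs (x, y) ∈ ℤ × ℤ with -2x^3 + 5x^2y + 4xy^2 - 3y^3 = 3. -/
theorem stmt12 :
    {xy : ℤ × ℤ | -2*xy.1^3 + 5*xy.1^2*xy.2 + 4*xy.1*xy.2^2 - 3*xy.2^3 = 3}.Finite ∧
    {xy : ℤ × ℤ | -2*xy.1^3 + 5*xy.1^2*xy.2 + 4*xy.1*xy.2^2 - 3*xy.2^3 = 3}.ncard = 1 := by
  have key : ∀ x y : ℤ, -2*x^3 + 5*x^2*y + 4*x*y^2 - 3*y^3 = 3 → x = 0 ∧ y = -1 := by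
    intro x y h
    have h' : (x+y)*((2*x-y)*(x-3*y)) = -3 := by nlinarith [sq_nonneg x, sq_nonneg y]
    have d1 : (x+y) ∣ 3 := dvd_neg.mp ⟨(2*x-y)*(x-3*y), h'.symm⟩
    have h'' : (2*x-y)*((x+y)*(x-3*y)) = -3 := by nlinarith [h']
    have d2 : (2*x-y) ∣ 3 := dvd_neg.mp ⟨(x+y)*(x-3*y), h''.symm⟩
    have b1 : |x+y| ≤ 3 := Int.le_of_dvd (by norm_num) ((abs_dvd _ _).mpr d1)
    have b2 : |2*x-y| ≤ 3 := Int.le_of_dvd (by norm_num) ((abs_dvd _ _).mpr d2)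
    rw [abs_le] at b1 b2
    have hx : -2 ≤ x ∧ x ≤ 2 := by omega
    have hy : -3 ≤ y ∧ y ≤ 3 := by omega
    obtain ⟨hx1, hx2⟩ := hx
    obtain ⟨hy1, hy2⟩ := hy
    interval_cases x <;> interval_cases y <;> omega
  have hset : {xy : ℤ × ℤ | -2*xy.1^3 + 5*xy.1^2*xy.2 + 4*xy.1*xy.2^2 - 3*xy.2^3 = 3}
      = {((0 : ℤ), (-1 : ℤ))} := by
    ext ⟨x, y⟩
    simp only [Set.mem_setOf_eq, Set.mem_singleton_iff, Prod.mk.injEq]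
    constructor
    · intro h; exact key x y h
    · rintro ⟨rfl, rfl⟩; norm_num
  rw [hset]
  exact ⟨Set.finite_singleton _, Set.ncard_singleton _⟩
end
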